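/- In the ring A = (C^∞(ℝ))^ℕ with diagonal U∞ of constant sequences, the collection ID of ideals I of A satisfying the off-diagonality condition I ∩ U∞ = {0} has no greatest element: there is no ideal I* ∈ ID containing every ideal in ID. -/

import Mathlib

/-- The subring of smooth functions `C^∞(ℝ)` inside `ℝ → ℝ`. -/
def SmoothR : Subring (ℝ → ℝ) where
  carrier := {f | ContDiff ℝ (⊤ : ℕ∞) f}
  mul_mem' := fun {f g} (hf : ContDiff ℝ (⊤ : ℕ∞) f) (hg : ContDiff ℝ (⊤ : ℕ∞) g) => hf.mul hg
  one_mem' := show ContDiff ℝ (⊤ : ℕ∞) (fun _ : ℝ => (1:ℝ)) from contDiff_const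
  add_mem' := fun {f g} (hf : ContDiff ℝ (⊤ : ℕ∞) f) (hg : ContDiff ℝ (⊤ : ℕ∞) g) => hf.add hg
  zero_mem' := show ContDiff ℝ (⊤ : ℕ∞) (fun _ : ℝ => (0:ℝ)) from contDiff_const
  neg_mem' := fun {f} (hf : ContDiff ℝ (⊤ : ℕ∞) f) => hf.neg

/-- The ring `A = (C^∞(ℝ))^ℕ` of sequences of smooth functions, termwise operations. -/
abbrev SeqA : Type := ℕ → SmoothR

/-- The diagonal `U∞ ⊆ A` of constant sequences. -/
def diagU : Set SeqA := {a | ∃ ψ : SmoothR, ∀ ν, a ν = ψ}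

/-- `v' = (1 + sin (ν ·))_ν`. -/
noncomputable def vSin : SeqA := fun ν =>
  ⟨fun x => 1 + Real.sin (ν * x),
   show ContDiff ℝ (⊤ : ℕ∞) _ from
     contDiff_const.add ((Real.contDiff_sin.comp (contDiff_const.mul contDiff_id) :
       ContDiff ℝ (⊤ : ℕ∞) fun x : ℝ => Real.sin ((ν : ℝ) * x)))⟩

/-- `v'' = (1 + cos (ν ·))_ν`. -/
noncomputable def vCos : SeqA := fun ν =>
  ⟨fun x => 1 + Real.cos (ν * x),
   show ContDiff ℝ (⊤ : ℕ∞) _ from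
     contDiff_const.add ((Real.contDiff_cos.comp (contDiff_const.mul contDiff_id) :
       ContDiff ℝ (⊤ : ℕ∞) fun x : ℝ => Real.cos ((ν : ℝ) * x)))⟩

open Real in
/-- The set of points of the form `(t0 + 2πk)/ν` (`ν ≥ 1`, `k ∈ ℤ`) is dense. -/
lemma dense_shifted (t0 : ℝ) :
    Dense {x : ℝ | ∃ ν : ℕ, ∃ k : ℤ, 0 < ν ∧ x = (t0 + 2*π*k)/ν} := by
  intro x
  rw [Metric.mem_closure_iff]
  intro ε hε
  obtain ⟨ν, hν⟩ := exists_nat_gt (2*π/ε)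
  have hπ : (0:ℝ) < 2*π := by positivity
  have hν0 : (0:ℝ) < ν := lt_of_le_of_lt (by positivity) hν
  set k : ℤ := ⌈((ν:ℝ) * x - t0) / (2*π)⌉ with hk
  refine ⟨(t0 + 2*π*k)/ν, ⟨ν, k, by exact_mod_cast hν0, rfl⟩, ?_⟩
  have h1 : ((ν:ℝ) * x - t0) / (2*π) ≤ (k:ℝ) := Int.le_ceil _
  have h2 : (k:ℝ) < ((ν:ℝ) * x - t0) / (2*π) + 1 := Int.ceil_lt_add_one _
  have hlow : (ν:ℝ) * x ≤ t0 + 2*π*k := by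
    have := (div_le_iff₀ hπ).mp h1; linarith
  have hhigh : t0 + 2*π*k < (ν:ℝ) * x + 2*π := by
    have h2' : ((k:ℝ) - 1) * (2*π) < (ν:ℝ) * x - t0 := by
      rw [← lt_div_iff₀ hπ]; linarith
    nlinarith
  have hd : dist x ((t0 + 2*π*k)/ν) = (t0 + 2*π*k)/ν - x := by
    rw [Real.dist_eq, abs_of_nonpos]
    · ring
    · have : x ≤ (t0 + 2*π*k)/ν := by
        rw [le_div_iff₀ hν0]; linarith
      linarith
  rw [hd]
  have hεν : 2*π/ν < ε := by
    rw [div_lt_iff₀ hν0]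
    have := (div_lt_iff₀ hε).mp hν
    linarith
  have : (t0 + 2*π*k)/ν - x < 2*π/ν := by
    rw [div_sub' (ne_of_gt hν0), div_lt_div_iff₀ hν0 hν0]
    nlinarith
  linarith

/-- The principal ideal on a sequence whose components have jointly dense zeros is
off-diagonal. -/
lemma span_offdiagonal (v : SeqA)
    (hd : Dense {x : ℝ | ∃ ν : ℕ, ((v ν : ℝ → ℝ)) x = 0}) :
    ((Ideal.span {v} : Ideal SeqA) : Set SeqA) ∩ diagU = {0} := by
  ext a
  simp only [Set.mem_inter_iff, Set.mem_singleton_iff]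
  constructor
  · rintro ⟨ha, ψ, hψ⟩
    rw [SetLike.mem_coe, Ideal.mem_span_singleton] at ha
    obtain ⟨c, hc⟩ := ha
    have hψ0 : (ψ : ℝ → ℝ) = 0 := by
      refine Continuous.ext_on hd (show ContDiff ℝ (⊤ : ℕ∞) (ψ : ℝ → ℝ) from ψ.2).continuous continuous_const ?_
      rintro x ⟨ν, hν⟩
      have h1 : a ν = ψ := hψ ν
      have h2 : (a ν : ℝ → ℝ) x = (v ν : ℝ → ℝ) x * (c ν : ℝ → ℝ) x := by
        rw [hc]; rfl
      have : (ψ : ℝ → ℝ) x = (v ν : ℝ → ℝ) x * (c ν : ℝ → ℝ) x := by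
        rw [← h1]; exact h2
      simp [this, hν]
    funext ν
    rw [hψ ν]
    exact Subtype.ext hψ0
  · rintro rfl
    exact ⟨(Ideal.span {v}).zero_mem, 0, fun ν => rfl⟩

open Real in
lemma vSin_offdiagonal :
    ((Ideal.span {vSin} : Ideal SeqA) : Set SeqA) ∩ diagU = {0} := by
  apply span_offdiagonal
  refine (dense_shifted (3*π/2)).mono ?_
  rintro x ⟨ν, k, hν, rfl⟩
  refine ⟨ν, ?_⟩
  have hν0 : ((ν:ℝ)) ≠ 0 := by exact_mod_cast hν.ne'
  show 1 + Real.sin ((ν:ℝ) * ((3*π/2 + 2*π*k)/ν)) = 0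
  rw [mul_div_cancel₀ _ hν0]
  have h2 : (3*π/2 + 2*π*k) = 3*π/2 + (k:ℝ) * (2*π) := by ring
  rw [h2, Real.sin_add_int_mul_two_pi]
  have h3 : (3*π/2) = π + π/2 := by ring
  rw [h3, Real.sin_add, Real.sin_pi, Real.cos_pi, Real.sin_pi_div_two]
  ring

open Real in
lemma vCos_offdiagonal :
    ((Ideal.span {vCos} : Ideal SeqA) : Set SeqA) ∩ diagU = {0} := by
  apply span_offdiagonal
  refine (dense_shifted π).mono ?_
  rintro x ⟨ν, k, hν, rfl⟩
  refine ⟨ν, ?_⟩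
  have hν0 : ((ν:ℝ)) ≠ 0 := by exact_mod_cast hν.ne'
  show 1 + Real.cos ((ν:ℝ) * ((π + 2*π*k)/ν)) = 0
  rw [mul_div_cancel₀ _ hν0]
  have h2 : (π + 2*π*k) = π + (k:ℝ) * (2*π) := by ring
  rw [h2, Real.cos_add_int_mul_two_pi, Real.cos_pi]
  ring

lemma sum_ne_zero (y : ℝ) : 2 + Real.sin y + Real.cos y ≠ 0 := by
  intro h
  nlinarith [Real.sin_sq_add_cos_sq y, Real.neg_one_le_sin y, Real.neg_one_le_cos y]

/-- The inverse of `vSin + vCos`. -/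
noncomputable def wInv : SeqA := fun ν =>
  ⟨fun x => (2 + Real.sin (ν * x) + Real.cos (ν * x))⁻¹, by
    have h : ContDiff ℝ (⊤ : ℕ∞) fun x : ℝ => 2 + Real.sin ((ν:ℝ) * x) + Real.cos ((ν:ℝ) * x) :=
      (contDiff_const.add (Real.contDiff_sin.comp (contDiff_const.mul contDiff_id))).add
        (Real.contDiff_cos.comp (contDiff_const.mul contDiff_id))
    exact h.inv fun x => sum_ne_zero _⟩

lemma wInv_mul : wInv * (vSin + vCos) = 1 := by
  funext ν
  refine Subtype.ext (funext fun x => ?_)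
  show (2 + Real.sin (ν * x) + Real.cos (ν * x))⁻¹ *
    ((1 + Real.sin (ν * x)) + (1 + Real.cos (ν * x))) = 1
  rw [show (1 + Real.sin (ν * x)) + (1 + Real.cos (ν * x))
      = 2 + Real.sin (ν * x) + Real.cos (ν * x) by ring]
  exact inv_mul_cancel₀ (sum_ne_zero _)

/-- In `A = (C^∞(ℝ))^ℕ` with diagonal `U∞` of constant sequences, the collection of
ideals satisfying the off-diagonality condition `I ∩ U∞ = {0}` has no greatest element. -/
theorem no_largest_offdiagonal_ideal :
    ¬ ∃ Istar : Ideal SeqA, ((Istar : Set SeqA) ∩ diagU = {0}) ∧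
        ∀ I : Ideal SeqA, ((I : Set SeqA) ∩ diagU = {0}) → I ≤ Istar := by
  rintro ⟨Istar, hoff, hmax⟩
  have h1 : vSin ∈ Istar :=
    hmax _ vSin_offdiagonal (Ideal.subset_span (Set.mem_singleton _))
  have h2 : vCos ∈ Istar :=
    hmax _ vCos_offdiagonal (Ideal.subset_span (Set.mem_singleton _))
  have hone : (1 : SeqA) ∈ Istar := by
    rw [← wInv_mul]
    exact Ideal.mul_mem_left _ _ (Istar.add_mem h1 h2)
  have : (1 : SeqA) ∈ ((Istar : Set SeqA) ∩ diagU) :=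
    ⟨hone, 1, fun ν => rfl⟩
  rw [hoff] at this
  have h10 : (1 : SeqA) 0 = 0 := congrFun this 0
  have := congrFun (congrArg (fun f : SmoothR => (f : ℝ → ℝ)) h10) 0
  norm_num at this
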